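/- Let 𝒢 be a temporal graph with lifetime T in which every snapshot has at least one edge, let ω ≥ 0, and let d be a positive integer. Then there exist integers 0 = t_0 < t_1 < ⋯ < t_ℓ = T such that t_j − t_{j−1} ≤ 2d for each 1 ≤ j ≤ ℓ and Σ_{i=1}^ℓ q̃*_ω(𝒢_{[t_{i−1}+1,t_i]}) ≥ (1 − 1/d)·q̃*_ω(𝒢). -/

import Mathlib

open Finset
open scoped Classical

namespace TemporalModularity

noncomputable section

variable {V : Type*} [Fintype V] {P : Type*}

/-- Twice the number of edges of `G` with both endpoints in `A`
(the sum over ordered pairs of vertices of `A` of the adjacency indicator). -/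
def twoE (G : SimpleGraph V) (A : Finset V) : ℝ :=
  ∑ u ∈ A, ∑ v ∈ A, if G.Adj u v then (1 : ℝ) else 0

/-- The degree of `v` in `G`, as a real number. -/
def deg (G : SimpleGraph V) (v : V) : ℝ :=
  ∑ u : V, if G.Adj v u then (1 : ℝ) else 0

/-- The number of edges of `G` (half the sum of the degrees), as a real number. -/
def numEdges (G : SimpleGraph V) : ℝ := (∑ v : V, deg G v) / 2

/-- The volume of `A` in `G`: the sum of the degrees of the vertices of `A`. -/
def vol (G : SimpleGraph V) (A : Finset V) : ℝ := ∑ v ∈ A, deg G v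

/-- The part with label `p` of the vertex partition induced by the labelling `π`. -/
def part (π : V → P) (p : P) : Finset V := univ.filter fun v => π v = p

/-- `Σ_{A ∈ 𝒜} (2 e_G(A) − vol_G(A)² / (2m))`, where `𝒜` is the partition of the
vertices induced by the labelling `π` (empty parts contribute zero). -/
def snapTerm (G : SimpleGraph V) (π : V → P) : ℝ :=
  ∑ p ∈ univ.image π,
    (twoE G (part π p) - vol G (part π p) ^ 2 / (2 * numEdges G))

/-- The static modularity `q(G,𝒜) = Σ_{A ∈ 𝒜} (e(A)/m − vol(A)²/(4m²))` of the
partition induced by the labelling `π`. -/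
def staticQ (G : SimpleGraph V) (π : V → P) : ℝ :=
  ∑ p ∈ univ.image π,
    (twoE G (part π p) / (2 * numEdges G) -
      vol G (part π p) ^ 2 / (4 * numEdges G ^ 2))

/-- The maximum static modularity `q*(G)` over all vertex partitions (every partition
of `V` is induced by some labelling `V → V`). -/
def staticQStar (G : SimpleGraph V) : ℝ := ⨆ π : V → V, staticQ G π

/-- The loyalty contribution `L(𝒜)` of the temporal partition `π` with lifetime `T`. -/
def loyalty (T : ℕ) (π : V → ℕ → P) : ℝ :=
  ∑ v : V, ∑ t ∈ Icc 1 (T - 1), if π v t = π v (t + 1) then (1 : ℝ) else 0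

/-- The per-time loyalty `L(𝒜,t)` of the temporal partition `π`. -/
def loyaltyAt (π : V → ℕ → P) (t : ℕ) : ℝ :=
  ∑ v : V, if π v t = π v (t + 1) then (1 : ℝ) else 0

/-- The normalisation factor `μ_ω(𝒢) = ω n (T−1)/2 + Σ_t m_t`. -/
def mu (G : ℕ → SimpleGraph V) (T : ℕ) (ω : ℝ) : ℝ :=
  ω * (Fintype.card V) * ((T : ℝ) - 1) / 2 + ∑ t ∈ Icc 1 T, numEdges (G t)

/-- The non-normalised temporal modularity of the restriction of the temporal graph
`G` to the time interval `[a,b]`, for the partition `π`. -/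
def qTildeI (G : ℕ → SimpleGraph V) (a b : ℕ) (ω : ℝ) (π : V → ℕ → P) : ℝ :=
  (∑ t ∈ Icc a b, snapTerm (G t) fun v => π v t) +
    ω * ∑ v : V, ∑ t ∈ Icc a (b - 1), if π v t = π v (t + 1) then (1 : ℝ) else 0

/-- The non-normalised temporal modularity `q̃_ω(𝒢,𝒜)` of the partition `π` of the
temporal graph `G` with lifetime `T`. -/
def qTilde (G : ℕ → SimpleGraph V) (T : ℕ) (ω : ℝ) (π : V → ℕ → P) : ℝ :=
  qTildeI G 1 T ω π

/-- The temporal modularity `q_ω(𝒢,𝒜)` of the partition `π` of the temporal graph `G`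
with lifetime `T`. -/
def qTemp (G : ℕ → SimpleGraph V) (T : ℕ) (ω : ℝ) (π : V → ℕ → P) : ℝ :=
  qTilde G T ω π / (2 * mu G T ω)

/-- The temporal modularity `q*_ω(𝒢)`: the maximum of `q_ω(𝒢,𝒜)` over all partitions
(every partition of `V × [T]` is induced by some labelling into `ℕ`). -/
def qTempStar (G : ℕ → SimpleGraph V) (T : ℕ) (ω : ℝ) : ℝ :=
  ⨆ π : V → ℕ → ℕ, qTemp G T ω π

/-- The temporal `k`-modularity `q*_{k,ω}(𝒢)`: the maximum of `q_ω(𝒢,𝒜)` over all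
partitions into at most `k` parts. -/
def qTempStarK (G : ℕ → SimpleGraph V) (T : ℕ) (ω : ℝ) (k : ℕ) : ℝ :=
  ⨆ π : V → ℕ → Fin k, qTemp G T ω π

/-- The maximum non-normalised temporal modularity of the restriction of `G` to the
time interval `[a,b]`, over all partitions. -/
def qTildeStarI (G : ℕ → SimpleGraph V) (a b : ℕ) (ω : ℝ) : ℝ :=
  ⨆ π : V → ℕ → ℕ, qTildeI G a b ω π

/-- The non-normalised temporal modularity `q̃*_ω(𝒢)` of the temporal graph `G` with
lifetime `T`. -/
def qTildeStar (G : ℕ → SimpleGraph V) (T : ℕ) (ω : ℝ) : ℝ := qTildeStarI G 1 T ω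

/-- The maximum non-normalised temporal modularity of the restriction of `G` to `[a,b]`
over partitions into at most `c` parts. -/
def qTildeStarKI (G : ℕ → SimpleGraph V) (a b : ℕ) (ω : ℝ) (c : ℕ) : ℝ :=
  ⨆ π : V → ℕ → Fin c, qTildeI G a b ω π

/-- The non-normalised temporal `c`-modularity `q̃*_{c,ω}(𝒢)`. -/
def qTildeStarK (G : ℕ → SimpleGraph V) (T : ℕ) (ω : ℝ) (c : ℕ) : ℝ :=
  qTildeStarKI G 1 T ω c

end

/-! Cutting a temporal partition at the boundaries `t_1 < ⋯ < t_{ℓ-1}` splits its value into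
the values of its restrictions plus `ω` times the loyalty across each cut, which is at most
`ω n` per cut. Cutting every `d` steps makes at most `(T - 1) / d` cuts. The partition with a
single part at every time has vanishing snapshot terms and full loyalty, so
`ω n (T - 1) ≤ q̃*_ω(𝒢)`, and the total loss `ω n (T - 1) / d` is at most `q̃*_ω(𝒢) / d`. -/

lemma sum_Icc_eq_sum_Icc_add_sum_Icc {M : Type*} [AddCommMonoid M] (f : ℕ → M) {a b c : ℕ}
    (hac : a ≤ c + 1) (hcb : c ≤ b) :
    ∑ t ∈ Icc a b, f t = ∑ t ∈ Icc a c, f t + ∑ t ∈ Icc (c + 1) b, f t := by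
  rw [← sum_union]
  · congr 1
    ext x
    simp only [mem_union, mem_Icc]
    omega
  · exact disjoint_left.2 fun x hx hx' => by simp only [mem_Icc] at hx hx'; omega

lemma twoE_le_card_sq {V : Type*} (G : SimpleGraph V) (A : Finset V) : twoE G A ≤ (#A : ℝ) ^ 2 :=
  calc twoE G A ≤ ∑ _u ∈ A, ∑ _v ∈ A, (1 : ℝ) :=
        sum_le_sum fun _ _ => sum_le_sum fun _ _ => by split_ifs <;> norm_num
    _ = (#A : ℝ) ^ 2 := by simp [sq]

section

variable {V : Type*} [Fintype V] {P : Type*}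

lemma deg_nonneg (G : SimpleGraph V) (v : V) : 0 ≤ deg G v :=
  sum_nonneg fun _ _ => by split_ifs <;> norm_num

lemma numEdges_nonneg (G : SimpleGraph V) : 0 ≤ numEdges G :=
  div_nonneg (sum_nonneg fun v _ => deg_nonneg G v) zero_le_two

lemma snapTerm_le (G : SimpleGraph V) (π : V → P) :
    snapTerm G π ≤ (Fintype.card V : ℝ) ^ 3 := by
  have hterm : ∀ p ∈ univ.image π,
      twoE G (part π p) - vol G (part π p) ^ 2 / (2 * numEdges G) ≤
        (Fintype.card V : ℝ) ^ 2 := by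
    intro p _
    have hvol : 0 ≤ vol G (part π p) ^ 2 / (2 * numEdges G) := by
      have := numEdges_nonneg G
      positivity
    have hA : (#(part π p) : ℝ) ≤ Fintype.card V := by exact_mod_cast card_le_univ _
    calc _ ≤ twoE G (part π p) := sub_le_self _ hvol
      _ ≤ (#(part π p) : ℝ) ^ 2 := twoE_le_card_sq G _
      _ ≤ (Fintype.card V : ℝ) ^ 2 := by gcongr
  have hparts : (#(univ.image π) : ℝ) ≤ Fintype.card V := by exact_mod_cast card_image_le
  calc snapTerm G π ≤ #(univ.image π) • (Fintype.card V : ℝ) ^ 2 :=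
        sum_le_card_nsmul _ _ _ hterm
    _ ≤ (Fintype.card V : ℝ) * (Fintype.card V : ℝ) ^ 2 := by
        rw [nsmul_eq_mul]
        gcongr
    _ = (Fintype.card V : ℝ) ^ 3 := by ring

lemma loyaltyAt_le (π : V → ℕ → P) (t : ℕ) : loyaltyAt π t ≤ Fintype.card V :=
  calc loyaltyAt π t ≤ ∑ _v : V, (1 : ℝ) := sum_le_sum fun _ _ => by split_ifs <;> norm_num
    _ = Fintype.card V := by simp

lemma qTildeI_eq_sum_loyaltyAt (G : ℕ → SimpleGraph V) (a b : ℕ) (ω : ℝ) (π : V → ℕ → P) :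
    qTildeI G a b ω π =
      (∑ t ∈ Icc a b, snapTerm (G t) fun v => π v t) +
        ω * ∑ t ∈ Icc a (b - 1), loyaltyAt π t := by
  rw [qTildeI, sum_comm]
  rfl

lemma qTildeI_le (G : ℕ → SimpleGraph V) (a b : ℕ) {ω : ℝ} (hω : 0 ≤ ω) (π : V → ℕ → P) :
    qTildeI G a b ω π ≤
      #(Icc a b) • (Fintype.card V : ℝ) ^ 3 + ω * (#(Icc a (b - 1)) • (Fintype.card V : ℝ)) := by
  rw [qTildeI_eq_sum_loyaltyAt]
  gcongr
  · exact sum_le_card_nsmul _ _ _ fun t _ => snapTerm_le _ _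
  · exact sum_le_card_nsmul _ _ _ fun t _ => loyaltyAt_le π t

lemma bddAbove_range_qTildeI (G : ℕ → SimpleGraph V) (a b : ℕ) {ω : ℝ} (hω : 0 ≤ ω) :
    BddAbove (Set.range fun π : V → ℕ → ℕ => qTildeI G a b ω π) :=
  ⟨_, Set.forall_mem_range.2 (qTildeI_le G a b hω)⟩

lemma qTildeI_split (G : ℕ → SimpleGraph V) (ω : ℝ) (π : V → ℕ → P) {a b c : ℕ}
    (hac : a ≤ c) (hcb : c < b) (hc : 0 < c) :
    qTildeI G a b ω π = qTildeI G a c ω π + qTildeI G (c + 1) b ω π + ω * loyaltyAt π c := by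
  have hsnap := sum_Icc_eq_sum_Icc_add_sum_Icc (fun t => snapTerm (G t) fun v => π v t)
    (a := a) (by omega) hcb.le
  have hloyalty : ∑ t ∈ Icc a (b - 1), loyaltyAt π t =
      ∑ t ∈ Icc a (c - 1), loyaltyAt π t + loyaltyAt π c +
        ∑ t ∈ Icc (c + 1) (b - 1), loyaltyAt π t := by
    rw [sum_Icc_eq_sum_Icc_add_sum_Icc _ (a := a) (c := c - 1) (by omega) (by omega),
      Nat.sub_add_cancel hc,
      sum_Icc_eq_sum_Icc_add_sum_Icc _ (a := c) (c := c) (by omega) (by omega),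
      Icc_self, sum_singleton, add_assoc]
  simp only [qTildeI_eq_sum_loyaltyAt, hsnap, hloyalty]
  ring

lemma qTildeI_eq_sum_add_sum_loyaltyAt (G : ℕ → SimpleGraph V) (ω : ℝ) (π : V → ℕ → P)
    (t : ℕ → ℕ) (ℓ : ℕ) (ht : ∀ i ≤ ℓ, t i < t (i + 1)) :
    qTildeI G (t 0 + 1) (t (ℓ + 1)) ω π =
      ∑ i ∈ range (ℓ + 1), qTildeI G (t i + 1) (t (i + 1)) ω π +
        ω * ∑ i ∈ range ℓ, loyaltyAt π (t (i + 1)) := by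
  induction ℓ with
  | zero => simp
  | succ ℓ ih =>
    have h0 : t 0 < t (ℓ + 1) :=
      strictMonoOn_Iic_of_lt_succ (n := ℓ + 1) (fun m hm => ht m (by omega))
        (by simp) (by simp) (by omega)
    rw [qTildeI_split G ω π h0 (ht (ℓ + 1) le_rfl) (by omega),
      ih fun i hi => ht i (by omega), sum_range_succ _ (ℓ + 1),
      sum_range_succ (fun i => loyaltyAt π (t (i + 1))) ℓ]
    ring

lemma qTildeStarI_le_sum_add (G : ℕ → SimpleGraph V) {ω : ℝ} (hω : 0 ≤ ω) (t : ℕ → ℕ) (ℓ : ℕ)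
    (ht : ∀ i ≤ ℓ, t i < t (i + 1)) :
    qTildeStarI G (t 0 + 1) (t (ℓ + 1)) ω ≤
      ∑ i ∈ range (ℓ + 1), qTildeStarI G (t i + 1) (t (i + 1)) ω +
        ω * (ℓ * Fintype.card V) := by
  refine ciSup_le fun π => ?_
  rw [qTildeI_eq_sum_add_sum_loyaltyAt G ω π t ℓ ht]
  gcongr with i
  · exact le_ciSup (bddAbove_range_qTildeI G _ _ hω) π
  · exact (sum_le_card_nsmul _ _ _ fun i _ => loyaltyAt_le π (t (i + 1))).trans_eq (by simp)

lemma snapTerm_const (G : SimpleGraph V) (c : P) : snapTerm G (fun _ => c) = 0 := by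
  refine sum_eq_zero fun p hp => ?_
  obtain ⟨_, _, rfl⟩ := mem_image.1 hp
  have hpart : part (fun _ : V => c) c = univ := by simp [part]
  -- `2m - (2m)² / (2m) = 0`, also for `m = 0` since `x / 0 = 0`
  rw [hpart, twoE, vol, numEdges, mul_div_cancel₀ _ two_ne_zero, sq, mul_self_div_self]
  exact sub_self _

lemma qTildeI_const (G : ℕ → SimpleGraph V) (a b : ℕ) (ω : ℝ) (c : P) :
    qTildeI G a b ω (fun _ _ => c) = ω * (#(Icc a (b - 1)) * Fintype.card V) := by
  simp [qTildeI_eq_sum_loyaltyAt, snapTerm_const, loyaltyAt]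

lemma mul_card_le_qTildeStarI (G : ℕ → SimpleGraph V) (a b : ℕ) {ω : ℝ} (hω : 0 ≤ ω) :
    ω * (#(Icc a (b - 1)) * Fintype.card V) ≤ qTildeStarI G a b ω :=
  qTildeI_const G a b ω 0 ▸ le_ciSup (bddAbove_range_qTildeI G a b hω) fun _ _ => 0

end

lemma exists_cuts_of_gap_le {T d : ℕ} (hT : 1 ≤ T) (hd : 1 ≤ d) :
    ∃ (k : ℕ) (t : ℕ → ℕ), t 0 = 0 ∧ t (k + 1) = T ∧
      (∀ i < k + 1, t i < t (i + 1) ∧ t (i + 1) - t i ≤ d) ∧ k * d ≤ T - 1 := by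
  have hdiv := Nat.div_add_mod (T - 1) d
  have hmod := Nat.mod_lt (T - 1) hd
  refine ⟨(T - 1) / d, fun i => min (d * i) T, by simp, ?_, fun i hi => ?_,
    Nat.div_mul_le_self _ _⟩
  · dsimp only
    rw [mul_add, mul_one]
    omega
  · have : d * i ≤ d * ((T - 1) / d) := Nat.mul_le_mul_left d (by omega)
    dsimp only
    rw [mul_add, mul_one]
    omega

theorem qTildeStar_interval_lower_bound_general {V : Type*} [Fintype V]
    (T : ℕ) (hT : 1 ≤ T) (G : ℕ → SimpleGraph V)
    (ω : ℝ) (hω : 0 ≤ ω) (d : ℕ) (hd : 1 ≤ d) :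
    ∃ (ℓ : ℕ) (t : ℕ → ℕ), 1 ≤ ℓ ∧ t 0 = 0 ∧ t ℓ = T ∧
      (∀ i < ℓ, t i < t (i + 1) ∧ t (i + 1) - t i ≤ 2 * d) ∧
      (1 - 1 / (d : ℝ)) * qTildeStar G T ω ≤
        ∑ i ∈ Finset.range ℓ, qTildeStarI G (t i + 1) (t (i + 1)) ω := by
  obtain ⟨k, t, ht0, htk, hstep, hkd⟩ := exists_cuts_of_gap_le hT hd
  refine ⟨k + 1, t, by omega, ht0, htk,
    fun i hi => ⟨(hstep i hi).1, (hstep i hi).2.trans (by omega)⟩, ?_⟩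
  have hupper := qTildeStarI_le_sum_add G hω t k fun i hi => (hstep i (by omega)).1
  have hlower := mul_card_le_qTildeStarI G 1 T hω
  rw [ht0, htk] at hupper
  rw [Nat.card_Icc, Nat.sub_add_cancel hT] at hlower
  change qTildeStar G T ω ≤ _ at hupper
  change _ ≤ qTildeStar G T ω at hlower
  have hkd' : (k : ℝ) * d ≤ (T - 1 : ℕ) := by exact_mod_cast hkd
  have hd' : (0 : ℝ) < d := by exact_mod_cast hd
  have hloss : ω * (k * Fintype.card V) ≤ qTildeStar G T ω / d := by
    rw [le_div_iff₀ hd']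
    calc ω * (k * Fintype.card V) * d = ω * Fintype.card V * (k * d) := by ring
      _ ≤ ω * Fintype.card V * (T - 1 : ℕ) := by gcongr
      _ ≤ qTildeStar G T ω := by linarith
  calc (1 - 1 / (d : ℝ)) * qTildeStar G T ω = qTildeStar G T ω - qTildeStar G T ω / d := by ring
    _ ≤ _ := by linarith

/-- For any positive integer `d` there exist
`0 = t_0 < t_1 < ⋯ < t_ℓ = T` with `t_j − t_{j−1} ≤ 2d` for each `j`, such that
`Σ_{i=1}^ℓ q̃*_ω(𝒢_{[t_{i−1}+1,t_i]}) ≥ (1 − 1/d)·q̃*_ω(𝒢)`. -/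
theorem qTildeStar_interval_lower_bound {V : Type*} [Fintype V]
    (T : ℕ) (hT : 1 ≤ T) (G : ℕ → SimpleGraph V)
    (hE : ∀ t ∈ Icc 1 T, (G t).edgeSet.Nonempty)
    (ω : ℝ) (hω : 0 ≤ ω) (d : ℕ) (hd : 1 ≤ d) :
    ∃ (ℓ : ℕ) (t : ℕ → ℕ), 1 ≤ ℓ ∧ t 0 = 0 ∧ t ℓ = T ∧
      (∀ i < ℓ, t i < t (i + 1) ∧ t (i + 1) - t i ≤ 2 * d) ∧
      (1 - 1 / (d : ℝ)) * qTildeStar G T ω ≤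
        ∑ i ∈ Finset.range ℓ, qTildeStarI G (t i + 1) (t (i + 1)) ω :=
  qTildeStar_interval_lower_bound_general T hT G ω hω d hd

end TemporalModularity
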